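/- arXiv:1406.1965 — 2 statements merged into one kernel-verified Lean document; each statement's English description precedes it below -/
import Mathlib

section
/- Any two equal products of vector operations can be obtained from each other by a sequence of transpositions of adjacent commuting generators: if s̲₁⋯s̲ₙ = t̲₁⋯t̲ₙ in Vops(L̲)*, then the sequence (t̲₁,...,t̲ₙ) is obtained from (s̲₁,...,s̲ₙ) by swaps of adjacent generators a̲,b̲ with a̲b̲ = b̲a̲. -/
open scoped Classical

/-- Projection of a string onto a subalphabet `A`: delete all symbols not in `A`. -/
noncomputable def proj {α : Type*} (A : Set α) : List α → List α
  | [] => []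
  | a :: s => if a ∈ A then a :: proj A s else proj A s

/-- The vector operation `σ̲ = (σ/A₁, …, σ/Aₙ)` associated to a symbol `σ`. -/
noncomputable def vop {α : Type*} {n : ℕ} (A : Fin n → Set α) (σ : α) :
    Fin n → List α :=
  fun i => if σ ∈ A i then [σ] else []

/-- The product `σ̲₁ ⋯ σ̲ₘ` (elementwise concatenation in `(Σ*)ⁿ`) of the vector
operations of the symbols in a list. -/
noncomputable def vprod {α : Type*} {n : ℕ} (A : Fin n → Set α) :
    List α → (Fin n → List α)
  | [] => fun _ => []
  | σ :: l => fun i => vop A σ i ++ vprod A l i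

/-- One step of transposing two adjacent commuting generators. -/
inductive SwapStep {α : Type*} {n : ℕ} (A : Fin n → Set α) : List α → List α → Prop
  | swap (l r : List α) (σ τ : α) :
      (fun i => vop A σ i ++ vop A τ i) = (fun i => vop A τ i ++ vop A σ i) →
      SwapStep A (l ++ σ :: τ :: r) (l ++ τ :: σ :: r)


/-!
The `i`-th component of `σ̲₁ ⋯ σ̲ₘ` is the projection of `σ₁ ⋯ σₘ` onto `Aᵢ`, so the hypothesis says
that the two words have the same projections. Induct on the first word `σ :: ws`. Since `σ` lies in
some `Aᵢ`, it occurs in the second word; write it as `v₁ ++ σ :: v₂` with `σ ∉ v₁`. For every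
component containing `σ`, both projections start with `σ`, so no letter of `v₁` lies in that
component: `σ` commutes with all of `v₁` and can be swapped to the front. Cancelling `σ` leaves words
`ws` and `v₁ ++ v₂` with equal projections, to which the induction hypothesis applies.
-/

open Relation

namespace List

variable {α : Type*} {p : α → Bool} {a : α} {s t l : List α}

theorem filter_eq_nil_of_filter_append_cons_eq_cons (ha : a ∉ s)
    (h : (s ++ a :: t).filter p = a :: l) : s.filter p = [] := by
  rw [filter_append] at h
  cases hs : s.filter p with
  | nil => rfl
  | cons x xs =>
    rw [hs, cons_append, cons.injEq] at h
    exact absurd (h.1 ▸ (mem_filter.1 (hs ▸ mem_cons_self)).1) ha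

theorem filter_eq_filter_append_of_filter_cons_eq (ha : a ∉ s)
    (h : (a :: l).filter p = (s ++ a :: t).filter p) : l.filter p = (s ++ t).filter p := by
  by_cases hpa : p a
  · rw [filter_cons_of_pos hpa] at h
    have hs := filter_eq_nil_of_filter_append_cons_eq_cons ha h.symm
    simpa [filter_append, hs, hpa] using h
  · simpa [filter_append, filter_cons, hpa] using h

end List

section VectorOperations

variable {α : Type*} {n : ℕ} {A : Fin n → Set α}

theorem vprod_apply (l : List α) (i : Fin n) : vprod A l i = l.filter (· ∈ A i) := by
  induction l with
  | nil => rfl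
  | cons a l ih => by_cases h : a ∈ A i <;> simp [vprod, vop, h, ih]

theorem vop_append_comm_of_disjoint {σ τ : α} (h : ∀ i, σ ∈ A i → τ ∉ A i) :
    (fun i => vop A σ i ++ vop A τ i) = (fun i => vop A τ i ++ vop A σ i) := by
  funext i
  by_cases hσ : σ ∈ A i
  · simp [vop, hσ, h i hσ]
  · simp [vop, hσ]

theorem SwapStep.cons {u v : List α} (a : α) (h : SwapStep A u v) :
    SwapStep A (a :: u) (a :: v) := by
  cases h with
  | swap l r σ τ hc => exact .swap (a :: l) r σ τ hc

theorem reflTransGen_swapStep_cons {u v : List α} (a : α)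
    (h : ReflTransGen (SwapStep A) u v) : ReflTransGen (SwapStep A) (a :: u) (a :: v) :=
  ReflTransGen.lift (a :: ·) (fun _ _ => SwapStep.cons a) _ _ h

theorem reflTransGen_swapStep_cons_append {σ : α} {v₁ : List α} (v₂ : List α)
    (hdisj : ∀ τ ∈ v₁, ∀ i, σ ∈ A i → τ ∉ A i) :
    ReflTransGen (SwapStep A) (σ :: (v₁ ++ v₂)) (v₁ ++ σ :: v₂) := by
  induction v₁ with
  | nil => exact .refl
  | cons τ v₁ ih =>
    have hστ := vop_append_comm_of_disjoint (hdisj τ List.mem_cons_self)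
    exact .head (.swap [] (v₁ ++ v₂) σ τ hστ)
      (reflTransGen_swapStep_cons τ (ih fun τ' hτ' => hdisj τ' (List.mem_cons_of_mem τ hτ')))

open List in
theorem reflTransGen_swapStep_of_filter_eq {ws vs : List α}
    (hws : ∀ σ ∈ ws, σ ∈ ⋃ i, A i) (hvs : ∀ σ ∈ vs, σ ∈ ⋃ i, A i)
    (h : ∀ i, ws.filter (· ∈ A i) = vs.filter (· ∈ A i)) :
    ReflTransGen (SwapStep A) ws vs := by
  induction ws generalizing vs with
  | nil =>
    obtain _ | ⟨τ, vs⟩ := vs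
    · exact .refl
    · obtain ⟨i, hτ⟩ := Set.mem_iUnion.1 (hvs τ mem_cons_self)
      simpa [hτ] using h i
  | cons σ ws ih =>
    obtain ⟨i₀, hσ⟩ := Set.mem_iUnion.1 (hws σ mem_cons_self)
    have hσvs : σ ∈ vs := (mem_filter.1 (h i₀ ▸ mem_filter.2 ⟨mem_cons_self, by simpa⟩)).1
    obtain ⟨v₁, v₂, hσv₁, rfl, -⟩ := exists_erase_eq hσvs
    have hdisj : ∀ τ ∈ v₁, ∀ i, σ ∈ A i → τ ∉ A i := fun τ hτ i hσi => by
      have hv₁ := filter_eq_nil_of_filter_append_cons_eq_cons hσv₁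
        ((h i).symm.trans (filter_cons_of_pos (by simpa)))
      simpa using filter_eq_nil_iff.1 hv₁ τ hτ
    have hrest : ReflTransGen (SwapStep A) ws (v₁ ++ v₂) :=
      ih (fun τ hτ => hws τ (mem_cons_of_mem σ hτ))
        (fun τ hτ => hvs τ (by simp only [mem_append, mem_cons] at hτ ⊢; tauto))
        (fun i => filter_eq_filter_append_of_filter_cons_eq hσv₁ (h i))
    exact (reflTransGen_swapStep_cons σ hrest).trans (reflTransGen_swapStep_cons_append v₂ hdisj)

end VectorOperations

theorem vprod_eq_swaps_general {α : Type*} {n : ℕ} (A : Fin n → Set α) (ws vs : List α)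
    (hws : ∀ σ ∈ ws, σ ∈ ⋃ i, A i) (hvs : ∀ σ ∈ vs, σ ∈ ⋃ i, A i)
    (h : vprod A ws = vprod A vs) :
    Relation.ReflTransGen (SwapStep A) ws vs :=
  reflTransGen_swapStep_of_filter_eq hws hvs fun i => by
    simpa only [vprod_apply] using congrFun h i

/-- Two equal products of vector operations are related by a sequence of
transpositions of adjacent commuting generators. -/
theorem vprod_eq_swaps {α : Type*} {n : ℕ} (A : Fin n → Set α) (ws vs : List α)
    (hws : ∀ σ ∈ ws, σ ∈ ⋃ i, A i) (hvs : ∀ σ ∈ vs, σ ∈ ⋃ i, A i)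
    (hlen : ws.length = vs.length)
    (h : vprod A ws = vprod A vs) :
    Relation.ReflTransGen (SwapStep A) ws vs :=
  vprod_eq_swaps_general A ws vs hws hvs h
end

section
/- Projecting each component of the vector firing sequence construction recovers the parallel composition: {σ₁⋯σₘ ∈ Σ* : σ̲₁⋯σ̲ₘ ∈ VFS(L₁,...,Lₙ), σⱼ ∈ ⋃ᵢαLᵢ} = L₁ ‖ ⋯ ‖ Lₙ. -/
open scoped Classical

/-- Membership in the submonoid `Vops(A₁,…,Aₙ)*` of `(Σ*)ⁿ` generated by the
vector operations. -/
noncomputable def InVops {α : Type*} {n : ℕ} (A : Fin n → Set α)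
    (v : Fin n → List α) : Prop :=
  ∃ l : List α, (∀ σ ∈ l, σ ∈ ⋃ i, A i) ∧ vprod A l = v

/-- `VFS(L₁,…,Lₙ) = Vops(A₁,…,Aₙ)* ∩ (L₁ × ⋯ × Lₙ)`. -/
noncomputable def VFS {α : Type*} {n : ℕ} (A : Fin n → Set α)
    (L : Fin n → Set (List α)) : Set (Fin n → List α) :=
  {v | InVops A v ∧ ∀ i, v i ∈ L i}

/-- `L₁ ‖ ⋯ ‖ Lₙ = {s ∈ (⋃ᵢAᵢ)* : s/Aᵢ ∈ Lᵢ for all i}`. -/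
noncomputable def Par {α : Type*} {n : ℕ} (A : Fin n → Set α)
    (L : Fin n → Set (List α)) : Set (List α) :=
  {s | (∀ a ∈ s, a ∈ ⋃ i, A i) ∧ ∀ i, proj (A i) s ∈ L i}

/-- The hypotheses that each `(Lᵢ, Aᵢ)` is a nonempty prefix-closed language
over the subalphabet `Aᵢ`. -/
def IsPCL {α : Type*} {n : ℕ} (A : Fin n → Set α)
    (L : Fin n → Set (List α)) : Prop :=
  ∀ i, (L i).Nonempty ∧ (∀ s ∈ L i, ∀ a ∈ s, a ∈ A i) ∧
    (∀ s ∈ L i, ∀ t, t <+: s → t ∈ L i)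

theorem vprod_apply_eq_proj {α : Type*} {n : ℕ} (A : Fin n → Set α) (s : List α) (i : Fin n) :
    vprod A s i = proj (A i) s := by
  induction s with
  | nil => rfl
  | cons a s ih => by_cases h : a ∈ A i <;> simp [vprod, vop, proj, h, ih]

theorem vfs_symbols_eq_par_general {α : Type*} {n : ℕ} (A : Fin n → Set α)
    (L : Fin n → Set (List α)) :
    {s : List α | (∀ a ∈ s, a ∈ ⋃ i, A i) ∧ vprod A s ∈ VFS A L} = Par A L := by
  ext s
  simp only [Set.mem_ofPred_eq, VFS, Par, vprod_apply_eq_proj]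
  exact ⟨fun ⟨hs, _, hL⟩ => ⟨hs, hL⟩, fun ⟨hs, hL⟩ => ⟨hs, ⟨s, hs, rfl⟩, hL⟩⟩

/-- Reading off the symbols of vector firing sequences recovers the parallel
composition: `{σ₁⋯σₘ : σ̲₁⋯σ̲ₘ ∈ VFS(L₁,…,Lₙ)} = L₁ ‖ ⋯ ‖ Lₙ`. -/
theorem vfs_symbols_eq_par {α : Type*} {n : ℕ} (A : Fin n → Set α)
    (L : Fin n → Set (List α)) (hL : IsPCL A L) :
    {s : List α | (∀ a ∈ s, a ∈ ⋃ i, A i) ∧ vprod A s ∈ VFS A L} = Par A L :=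
  vfs_symbols_eq_par_general A L
end
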